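/- arXiv:2009.02769 — 2 statements merged into one kernel-verified Lean document; each statement's English description precedes it below -/
import Mathlib

section
/- Lyapunov derivative factorization: with P = P_fᵀ P_f, Q = Q_fᵀ Q_f (P_f, Q_f invertible n×n), and the parametrized quadratic system E ẋ = A x + F(x, μ) x where F(x, μ) = Σᵢ xᵢ Mᵢ(μ), the derivative of v(x) = xᵀ Eᵀ P E x along trajectories can be written as v̇(x) = xᵀ Q_fᵀ [ −I_n + (xᵀ P_fᵀ ⊗ I_n) J(μ) ] Q_f x, where J(μ) = (P_fᵀ ⊗ Q_fᵀ)^{-1} G(μ) Q_f^{-1} and G(μ) is the n²×n matrix obtained by stacking the blocks Mᵢ(μ)ᵀ P E + Eᵀ P Mᵢ(μ). -/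
/-!
Write `K v = vᵀ ⊗ I`. Multiplying the stacked matrix `G` by `K x` recombines its blocks into
`Σᵢ xᵢ Gᵢ`, and the mixed-product rule gives `Q_fᵀ K (P_f x) = K x (P_fᵀ ⊗ Q_fᵀ)`. Hence in
`Q_fᵀ K (P_f x) J Q_f` the factors `P_fᵀ ⊗ Q_fᵀ` and `Q_f` cancel against their inverses in `J`,
leaving `Σᵢ xᵢ Gᵢ`, while `Q_fᵀ (−I) Q_f = −Q`.
-/

open Matrix Kronecker

namespace Matrix

variable {l m n α : Type*} [CommSemiring α] [Fintype m] [Fintype n] [DecidableEq m]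

variable (m) in
/-- `vᵀ ⊗ₖ 1`, with the singleton row index of `vᵀ` dropped. -/
def rowKroneckerOne (v : n → α) : Matrix m (n × m) α :=
  of fun k p => v p.1 * if k = p.2 then 1 else 0

theorem rowKroneckerOne_mul_kronecker (v : n → α) (C : Matrix n n α) (D : Matrix m m α) :
    rowKroneckerOne m v * (C ⊗ₖ D) = D * rowKroneckerOne m (v ᵥ* C) := by
  ext k ⟨i, j⟩
  simp only [mul_apply, Fintype.sum_prod_type, rowKroneckerOne, of_apply, kroneckerMap_apply,
    vecMul, dotProduct, mul_ite, mul_one, mul_zero, ite_mul, zero_mul, Finset.sum_ite_eq,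
    Finset.sum_ite_eq', Finset.mem_univ, ↓reduceIte, Finset.mul_sum]
  exact Finset.sum_congr rfl fun a _ => by ring

theorem rowKroneckerOne_mul_of (v : n → α) (B : n → Matrix m l α) :
    rowKroneckerOne m v * (of fun p k => B p.1 p.2 k : Matrix (n × m) l α) =
      ∑ i, v i • B i := by
  ext k j
  simp [mul_apply, Fintype.sum_prod_type, rowKroneckerOne, sum_apply]

end Matrix

theorem lyapunov_derivative_factorization_general {n : ℕ}
    (E P Q Pf Qf : Matrix (Fin n) (Fin n) ℝ)
    (M : Fin n → Matrix (Fin n) (Fin n) ℝ)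
    (hPf : IsUnit Pf) (hQf : IsUnit Qf)
    (hQ : Q = Qfᵀ * Qf)
    (G : Matrix (Fin n × Fin n) (Fin n) ℝ)
    (hG : G = Matrix.of fun p k => ((M p.1)ᵀ * P * E + Eᵀ * P * M p.1) p.2 k)
    (J : Matrix (Fin n × Fin n) (Fin n) ℝ)
    (hJ : J = (Pfᵀ ⊗ₖ Qfᵀ)⁻¹ * G * Qf⁻¹) :
    ∀ x : Fin n → ℝ,
      x ⬝ᵥ ((-Q + ∑ i, x i • ((M i)ᵀ * P * E + Eᵀ * P * M i)).mulVec x) =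
      x ⬝ᵥ ((Qfᵀ *
        (-(1 : Matrix (Fin n) (Fin n) ℝ) +
          (Matrix.of fun k (p : Fin n × Fin n) =>
            Pf.mulVec x p.1 * (if k = p.2 then (1:ℝ) else 0)) * J) * Qf).mulVec x) := by
  intro x
  have hKron : IsUnit (Pfᵀ ⊗ₖ Qfᵀ).det := (isUnit_iff_isUnit_det _).mp
    (((isUnit_transpose _).mpr hPf).kronecker ((isUnit_transpose _).mpr hQf))
  have hQfdet : IsUnit Qf.det := (isUnit_iff_isUnit_det _).mp hQf
  have hmixed :
      Qfᵀ * rowKroneckerOne (Fin n) (Pf *ᵥ x) = rowKroneckerOne (Fin n) x * (Pfᵀ ⊗ₖ Qfᵀ) := by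
    rw [rowKroneckerOne_mul_kronecker, vecMul_transpose]
  have hquadratic : Qfᵀ * (rowKroneckerOne (Fin n) (Pf *ᵥ x) * J) * Qf =
      ∑ i, x i • ((M i)ᵀ * P * E + Eᵀ * P * M i) :=
    calc Qfᵀ * (rowKroneckerOne (Fin n) (Pf *ᵥ x) * J) * Qf
        = rowKroneckerOne (Fin n) x * (Pfᵀ ⊗ₖ Qfᵀ) * (Pfᵀ ⊗ₖ Qfᵀ)⁻¹ * G * Qf⁻¹ * Qf := by
          rw [hJ, ← Matrix.mul_assoc, hmixed]; simp only [Matrix.mul_assoc]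
      _ = rowKroneckerOne (Fin n) x * G := by
          rw [nonsing_inv_mul_cancel_right _ _ hQfdet, mul_nonsing_inv_cancel_right _ _ hKron]
      _ = _ := by
          rw [hG]; exact rowKroneckerOne_mul_of x fun i => (M i)ᵀ * P * E + Eᵀ * P * M i
  have hsplit : Qfᵀ * (-1 + rowKroneckerOne (Fin n) (Pf *ᵥ x) * J) * Qf =
      -Q + ∑ i, x i • ((M i)ᵀ * P * E + Eᵀ * P * M i) := by
    rw [Matrix.mul_add, Matrix.add_mul, hquadratic, hQ, Matrix.mul_neg, Matrix.neg_mul,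
      Matrix.mul_one]
  exact congrArg (fun B => x ⬝ᵥ B *ᵥ x) hsplit.symm

/-- Lyapunov derivative factorization: with `P = P_fᵀ P_f`, `Q = Q_fᵀ Q_f`
(`P_f, Q_f` invertible), `Aᵀ P E + Eᵀ P A = −Q`, and the parametrized quadratic
field `F(x) x = Σᵢ xᵢ Mᵢ x`, the Lyapunov derivative
`v̇(x) = xᵀ(−Q + Σᵢ xᵢ (Mᵢᵀ P E + Eᵀ P Mᵢ))x` factors as
`v̇(x) = xᵀ Q_fᵀ [−I + (xᵀ P_fᵀ ⊗ I) J] Q_f x`, where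
`J = (P_fᵀ ⊗ Q_fᵀ)⁻¹ G Q_f⁻¹` and `G` stacks the blocks `Mᵢᵀ P E + Eᵀ P Mᵢ`. -/
theorem lyapunov_derivative_factorization {n : ℕ}
    (E A P Q Pf Qf : Matrix (Fin n) (Fin n) ℝ)
    (M : Fin n → Matrix (Fin n) (Fin n) ℝ)
    (hPf : IsUnit Pf) (hQf : IsUnit Qf)
    (hP : P = Pfᵀ * Pf) (hQ : Q = Qfᵀ * Qf)
    (hLyap : Aᵀ * P * E + Eᵀ * P * A = -Q)
    (G : Matrix (Fin n × Fin n) (Fin n) ℝ)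
    (hG : G = Matrix.of fun p k => ((M p.1)ᵀ * P * E + Eᵀ * P * M p.1) p.2 k)
    (J : Matrix (Fin n × Fin n) (Fin n) ℝ)
    (hJ : J = (Pfᵀ ⊗ₖ Qfᵀ)⁻¹ * G * Qf⁻¹) :
    ∀ x : Fin n → ℝ,
      x ⬝ᵥ ((-Q + ∑ i, x i • ((M i)ᵀ * P * E + Eᵀ * P * M i)).mulVec x) =
      x ⬝ᵥ ((Qfᵀ *
        (-(1 : Matrix (Fin n) (Fin n) ℝ) +
          (Matrix.of fun k (p : Fin n × Fin n) =>
            Pf.mulVec x p.1 * (if k = p.2 then (1:ℝ) else 0)) * J) * Qf).mulVec x) :=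
  lyapunov_derivative_factorization_general E P Q Pf Qf M hPf hQf hQ G hG J hJ
end

section
/- Negativity criterion from the norm bound: with the factorization v̇(x) = xᵀ Q_fᵀ[−I_n + (xᵀ P_fᵀ ⊗ I_n) J] Q_f x, if ‖J‖₂ = α and ‖P_f x‖₂ < 1/α, then v̇(x) < 0 for all x ≠ 0. In particular, since v(x) = xᵀ Eᵀ P E x = ‖P_f E x‖₂² (with E = I), the sublevel set {x : v(x) < 1/α²} \ {0} lies in the region where v̇ < 0. -/
/-!
With `y = Q_f x ≠ 0` and `M = (xᵀ P_fᵀ ⊗ I) J` we have `v̇(x) = -‖y‖² + yᵀ M y ≤ (‖M‖ - 1) ‖y‖²`,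
and `‖M‖ ≤ ‖xᵀ P_fᵀ ⊗ I‖ ‖J‖ ≤ ‖P_f x‖ α < 1`. The sublevel condition is the same bound,
since `xᵀ P_fᵀ P_f x = ‖P_f x‖²`.
-/

open Matrix

/-- Operator (spectral) 2-norm of a real matrix. -/
noncomputable def opNorm {m k : Type*} [Fintype m] [Fintype k] [DecidableEq k]
    (M : Matrix m k ℝ) : ℝ :=
  ‖LinearMap.toContinuousLinearMap (Matrix.toEuclideanLin M)‖

/-- Euclidean norm of a vector. -/
noncomputable def enorm2 {m : Type*} [Fintype m] (x : m → ℝ) : ℝ :=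
  Real.sqrt (∑ i, x i ^ 2)

open WithLp
open scoped Matrix.Norms.L2Operator RealInnerProductSpace

lemma opNorm_eq_l2_opNorm {m k : Type*} [Fintype m] [Fintype k] [DecidableEq k]
    (M : Matrix m k ℝ) : opNorm M = ‖M‖ :=
  rfl

section

variable {m : Type*} [Fintype m]

lemma enorm2_eq_norm_toLp (x : m → ℝ) : enorm2 x = ‖toLp 2 x‖ := by
  simp [enorm2, EuclideanSpace.norm_eq]

lemma dotProduct_transpose_mul_self_mulVec {ι : Type*} [Fintype ι] (P : Matrix ι m ℝ)
    (x : m → ℝ) : x ⬝ᵥ (Pᵀ * P) *ᵥ x = ‖toLp 2 (P *ᵥ x)‖ ^ 2 := by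
  rw [← real_inner_self_eq_norm_sq, EuclideanSpace.inner_toLp_toLp, star_trivial,
    ← mulVec_mulVec, dotProduct_mulVec, vecMul_transpose]

variable [DecidableEq m]

lemma dotProduct_mulVec_le_l2_opNorm_mul_sq (M : Matrix m m ℝ) (y : m → ℝ) :
    y ⬝ᵥ M *ᵥ y ≤ ‖M‖ * ‖toLp 2 y‖ ^ 2 := by
  calc y ⬝ᵥ M *ᵥ y = ⟪toLp 2 (M *ᵥ y), toLp 2 y⟫ := by
        rw [EuclideanSpace.inner_toLp_toLp, star_trivial]
    _ ≤ ‖toLp 2 (M *ᵥ y)‖ * ‖toLp 2 y‖ := real_inner_le_norm _ _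
    _ ≤ ‖M‖ * ‖toLp 2 y‖ * ‖toLp 2 y‖ := by
        gcongr
        exact M.l2_opNorm_mulVec (toLp 2 y)
    _ = ‖M‖ * ‖toLp 2 y‖ ^ 2 := by ring

lemma dotProduct_neg_one_add_mulVec_neg {M : Matrix m m ℝ} (hM : ‖M‖ < 1) {y : m → ℝ}
    (hy : y ≠ 0) : y ⬝ᵥ (-1 + M) *ᵥ y < 0 := by
  have hy_pos : 0 < ‖toLp 2 y‖ ^ 2 := pow_pos (norm_pos_iff.mpr (by simpa using hy)) 2
  have hself : y ⬝ᵥ y = ‖toLp 2 y‖ ^ 2 := by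
    rw [← real_inner_self_eq_norm_sq, EuclideanSpace.inner_toLp_toLp, star_trivial]
  calc y ⬝ᵥ (-1 + M) *ᵥ y = -‖toLp 2 y‖ ^ 2 + y ⬝ᵥ M *ᵥ y := by
        rw [add_mulVec, dotProduct_add, neg_mulVec, one_mulVec, dotProduct_neg, hself]
    _ ≤ (‖M‖ - 1) * ‖toLp 2 y‖ ^ 2 := by
        linarith [dotProduct_mulVec_le_l2_opNorm_mul_sq M y]
    _ < 0 := mul_neg_of_neg_of_pos (by linarith) hy_pos

end

section

variable {m ι : Type*} [Fintype m] [Fintype ι] [DecidableEq ι]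

/-- The Kronecker product `uᵀ ⊗ I`; with `u = P_f x` it is the factor `xᵀ P_fᵀ ⊗ I` of `v̇`. -/
def rowKronOne (u : m → ℝ) : Matrix ι (m × ι) ℝ :=
  of fun k p => u p.1 * if k = p.2 then 1 else 0

lemma rowKronOne_mulVec (u : m → ℝ) (w : m × ι → ℝ) (k : ι) :
    (rowKronOne u *ᵥ w) k = ∑ i, u i * w (i, k) := by
  simp [rowKronOne, mulVec, dotProduct, Fintype.sum_prod_type]

lemma norm_rowKronOne_mulVec_le (u : m → ℝ) (w : m × ι → ℝ) :
    ‖toLp 2 (rowKronOne u *ᵥ w)‖ ≤ ‖toLp 2 u‖ * ‖toLp 2 w‖ := by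
  refine (sq_le_sq₀ (by positivity) (by positivity)).mp ?_
  simp only [mul_pow, EuclideanSpace.real_norm_sq_eq, rowKronOne_mulVec]
  calc ∑ k, (∑ i, u i * w (i, k)) ^ 2 ≤ ∑ k, (∑ i, u i ^ 2) * ∑ i, w (i, k) ^ 2 :=
        Finset.sum_le_sum fun k _ => Finset.sum_mul_sq_le_sq_mul_sq _ _ _
    _ = (∑ i, u i ^ 2) * ∑ p, w p ^ 2 := by
        rw [← Finset.mul_sum, Fintype.sum_prod_type_right]

lemma l2_opNorm_rowKronOne_le [DecidableEq m] (u : m → ℝ) :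
    ‖(rowKronOne u : Matrix ι (m × ι) ℝ)‖ ≤ ‖toLp 2 u‖ :=
  ContinuousLinearMap.opNorm_le_bound _ (norm_nonneg _) fun w =>
    norm_rowKronOne_mulVec_le u (ofLp w)

end

theorem negativity_criterion_from_norm_bound_general {n : ℕ}
    (Pf Qf : Matrix (Fin n) (Fin n) ℝ)
    (hQf : IsUnit Qf)
    (J : Matrix (Fin n × Fin n) (Fin n) ℝ)
    (α : ℝ) (hα : α = opNorm J) (hαpos : 0 < α) :
    ∀ x : Fin n → ℝ, x ≠ 0 →
      (enorm2 (Pf.mulVec x) < 1 / α →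
        Qf.mulVec x ⬝ᵥ
          ((-(1 : Matrix (Fin n) (Fin n) ℝ) +
            (Matrix.of fun k (p : Fin n × Fin n) =>
              Pf.mulVec x p.1 * (if k = p.2 then (1:ℝ) else 0)) * J).mulVec
            (Qf.mulVec x)) < 0) ∧
      (x ⬝ᵥ (Pfᵀ * Pf).mulVec x < 1 / α ^ 2 →
        Qf.mulVec x ⬝ᵥ
          ((-(1 : Matrix (Fin n) (Fin n) ℝ) +
            (Matrix.of fun k (p : Fin n × Fin n) =>
              Pf.mulVec x p.1 * (if k = p.2 then (1:ℝ) else 0)) * J).mulVec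
            (Qf.mulVec x)) < 0) := by
  intro x hx
  have hQx : Qf *ᵥ x ≠ 0 := fun h =>
    hx (mulVec_injective_iff_isUnit.mpr hQf (by rw [h, mulVec_zero]))
  have hcrit (hPx : ‖toLp 2 (Pf *ᵥ x)‖ < 1 / α) :
      Qf *ᵥ x ⬝ᵥ (-1 + rowKronOne (Pf *ᵥ x) * J) *ᵥ Qf *ᵥ x < 0 := by
    refine dotProduct_neg_one_add_mulVec_neg ?_ hQx
    calc ‖rowKronOne (Pf *ᵥ x) * J‖ ≤ ‖rowKronOne (Pf *ᵥ x)‖ * ‖J‖ := l2_opNorm_mul _ _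
      _ ≤ ‖toLp 2 (Pf *ᵥ x)‖ * α := by
        rw [hα, opNorm_eq_l2_opNorm]
        gcongr
        exact l2_opNorm_rowKronOne_le _
      _ < 1 / α * α := by gcongr
      _ = 1 := by field_simp
  rw [enorm2_eq_norm_toLp, dotProduct_transpose_mul_self_mulVec]
  refine ⟨hcrit, fun hv => hcrit ?_⟩
  exact lt_of_pow_lt_pow_left₀ 2 (by positivity) (by rwa [div_pow, one_pow])

/-- Negativity criterion from the norm bound: with
`v̇(x) = (Q_f x)ᵀ[−I + (xᵀ P_fᵀ ⊗ I) J](Q_f x)` and `α = ‖J‖₂ > 0`, if `x ≠ 0` and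
`‖P_f x‖₂ < 1/α` then `v̇(x) < 0`; in particular the punctured sublevel set
`{x : v(x) = xᵀ P_fᵀ P_f x < 1/α²} \ {0}` lies in the region where `v̇ < 0`. -/
theorem negativity_criterion_from_norm_bound {n : ℕ}
    (Pf Qf : Matrix (Fin n) (Fin n) ℝ)
    (hPf : IsUnit Pf) (hQf : IsUnit Qf)
    (J : Matrix (Fin n × Fin n) (Fin n) ℝ)
    (α : ℝ) (hα : α = opNorm J) (hαpos : 0 < α) :
    ∀ x : Fin n → ℝ, x ≠ 0 →
      (enorm2 (Pf.mulVec x) < 1 / α →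
        Qf.mulVec x ⬝ᵥ
          ((-(1 : Matrix (Fin n) (Fin n) ℝ) +
            (Matrix.of fun k (p : Fin n × Fin n) =>
              Pf.mulVec x p.1 * (if k = p.2 then (1:ℝ) else 0)) * J).mulVec
            (Qf.mulVec x)) < 0) ∧
      (x ⬝ᵥ (Pfᵀ * Pf).mulVec x < 1 / α ^ 2 →
        Qf.mulVec x ⬝ᵥ
          ((-(1 : Matrix (Fin n) (Fin n) ℝ) +
            (Matrix.of fun k (p : Fin n × Fin n) =>
              Pf.mulVec x p.1 * (if k = p.2 then (1:ℝ) else 0)) * J).mulVec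
            (Qf.mulVec x)) < 0) :=
  negativity_criterion_from_norm_bound_general Pf Qf hQf J α hα hαpos
end
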